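/- arXiv:1609.00902 — 2 statements merged into one kernel-verified Lean document; each statement's English description precedes it below -/
import Mathlib

section
/- Let x, y, z be positive real numbers with xyz = 1 and let α be a real number with 0 < α < 1. Then (1/(x²-x+1))^α + (1/(y²-y+1))^α + (1/(z²-z+1))^α ≤ 3, where powers are real (rpow) powers. -/
/-!
By the tangent-line bound `t ^ α ≤ 1 + α (t - 1)` for `0 ≤ α ≤ 1` it suffices to treat `α = 1`.
Since `x⁴ + x² + 1 = (x² - x + 1)(x² + x + 1)`,
`1 / (x² - x + 1) = 2 - 2 x⁴ / (x⁴ + x² + 1) - 1 / (x² + x + 1)`,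
so the case `α = 1` follows from `∑ 1 / (a² + a + 1) ≥ 1` for real `a b c` with `abc = 1`,
applied to `(x, y, z)` and to `(x⁻², y⁻², z⁻²)`.
-/

open Finset

lemma sq_sub_add_one_pos (t : ℝ) : 0 < t ^ 2 - t + 1 := by nlinarith [sq_nonneg (2 * t - 1)]

lemma sq_add_add_one_pos (t : ℝ) : 0 < t ^ 2 + t + 1 := by
  simpa using sq_sub_add_one_pos (-t)

lemma one_le_sum_one_div_sq_add_add_one {a b c : ℝ} (h : a * b * c = 1) :
    1 ≤ 1 / (a ^ 2 + a + 1) + 1 / (b ^ 2 + b + 1) + 1 / (c ^ 2 + c + 1) := by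
  have ha := sq_add_add_one_pos a
  have hb := sq_add_add_one_pos b
  have hc := sq_add_add_one_pos c
  rw [div_add_div _ _ ha.ne' hb.ne', div_add_div _ _ (mul_pos ha hb).ne' hc.ne',
    le_div_iff₀ (by positivity)]
  have key : ((b ^ 2 + b + 1) + (a ^ 2 + a + 1)) * (c ^ 2 + c + 1)
        + (a ^ 2 + a + 1) * (b ^ 2 + b + 1) - (a ^ 2 + a + 1) * (b ^ 2 + b + 1) * (c ^ 2 + c + 1)
      = ((a - b) ^ 2 + (b - c) ^ 2 + (c - a) ^ 2) / 2
        - (a * b * c - 1) * (a + b + c + a * b + b * c + c * a + a * b * c + 2) := by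
    ring
  rw [h] at key
  nlinarith [sq_nonneg (a - b), sq_nonneg (b - c), sq_nonneg (c - a)]

lemma sq_div_sq_add_add_one_eq {a : ℝ} (ha : a ≠ 0) :
    a ^ 2 / (a ^ 2 + a + 1) = 1 / (a⁻¹ ^ 2 + a⁻¹ + 1) := by
  have := (sq_add_add_one_pos a).ne'
  field_simp
  ring

lemma one_le_sum_sq_div_sq_add_add_one {a b c : ℝ} (h : a * b * c = 1) :
    1 ≤ a ^ 2 / (a ^ 2 + a + 1) + b ^ 2 / (b ^ 2 + b + 1) + c ^ 2 / (c ^ 2 + c + 1) := by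
  have ha : a ≠ 0 := by rintro rfl; simp at h
  have hb : b ≠ 0 := by rintro rfl; simp at h
  have hc : c ≠ 0 := by rintro rfl; simp at h
  rw [sq_div_sq_add_add_one_eq ha, sq_div_sq_add_add_one_eq hb, sq_div_sq_add_add_one_eq hc]
  exact one_le_sum_one_div_sq_add_add_one (by rw [← mul_inv, ← mul_inv, h, inv_one])

lemma one_div_sq_sub_add_one_eq (x : ℝ) :
    1 / (x ^ 2 - x + 1)
      = 2 - 2 * ((x ^ 2) ^ 2 / ((x ^ 2) ^ 2 + x ^ 2 + 1)) - 1 / (x ^ 2 + x + 1) := by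
  have h₁ := (sq_sub_add_one_pos x).ne'
  have h₂ := (sq_add_add_one_pos x).ne'
  rw [show (x ^ 2) ^ 2 + x ^ 2 + 1 = (x ^ 2 - x + 1) * (x ^ 2 + x + 1) by ring,
    eq_sub_iff_add_eq, eq_sub_iff_add_eq, div_add_div _ _ h₁ h₂, mul_div_assoc', ← add_div,
    div_eq_iff (mul_ne_zero h₁ h₂)]
  ring

lemma sum_one_div_sq_sub_add_one_le_three {x y z : ℝ} (h : x * y * z = 1) :
    1 / (x ^ 2 - x + 1) + 1 / (y ^ 2 - y + 1) + 1 / (z ^ 2 - z + 1) ≤ 3 := by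
  have h_sq : x ^ 2 * y ^ 2 * z ^ 2 = 1 := by rw [← mul_pow, ← mul_pow, h, one_pow]
  rw [one_div_sq_sub_add_one_eq x, one_div_sq_sub_add_one_eq y, one_div_sq_sub_add_one_eq z]
  linarith [one_le_sum_one_div_sq_add_add_one h, one_le_sum_sq_div_sq_add_add_one h_sq]

lemma sum_rpow_le_card {ι : Type*} (s : Finset ι) {t : ι → ℝ} (ht : ∀ i ∈ s, 0 ≤ t i)
    (hsum : ∑ i ∈ s, t i ≤ #s) {α : ℝ} (hα0 : 0 ≤ α) (hα1 : α ≤ 1) :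
    ∑ i ∈ s, t i ^ α ≤ #s := by
  have tangent : ∀ i ∈ s, t i ^ α ≤ 1 + α * (t i - 1) := fun i hi => by
    simpa using rpow_one_add_le_one_add_mul_self (by linarith [ht i hi] : -1 ≤ t i - 1) hα0 hα1
  calc ∑ i ∈ s, t i ^ α ≤ ∑ i ∈ s, (1 + α * (t i - 1)) := sum_le_sum tangent
    _ = #s + α * (∑ i ∈ s, t i - #s) := by
      rw [sum_add_distrib, ← mul_sum, sum_sub_distrib]; simp
    _ ≤ #s := by nlinarith

theorem lemma_two_general (x y z α : ℝ)
    (h : x * y * z = 1) (hα0 : 0 < α) (hα1 : α < 1) :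
    (1 / (x ^ 2 - x + 1)) ^ α + (1 / (y ^ 2 - y + 1)) ^ α + (1 / (z ^ 2 - z + 1)) ^ α ≤ 3 := by
  have ht : ∀ i, 0 ≤ ![1 / (x ^ 2 - x + 1), 1 / (y ^ 2 - y + 1), 1 / (z ^ 2 - z + 1)] i := by
    simp [Fin.forall_fin_succ, (sq_sub_add_one_pos _).le]
  simpa [Fin.sum_univ_three] using sum_rpow_le_card univ (fun i _ => ht i)
    (by simpa [Fin.sum_univ_three] using sum_one_div_sq_sub_add_one_le_three h) hα0.le hα1.le

theorem lemma_two (x y z α : ℝ) (hx : 0 < x) (hy : 0 < y) (hz : 0 < z)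
    (h : x * y * z = 1) (hα0 : 0 < α) (hα1 : α < 1) :
    (1 / (x ^ 2 - x + 1)) ^ α + (1 / (y ^ 2 - y + 1)) ^ α + (1 / (z ^ 2 - z + 1)) ^ α ≤ 3 :=
  lemma_two_general x y z α h hα0 hα1
end

section
/- Let x, y, z be positive real numbers with xyz = 1 and let α be a real number with 0 < α < 1. Then ((x+1)/(x²+x+1))^α + ((y+1)/(y²+y+1))^α + ((z+1)/(z²+z+1))^α ≤ 3 - α, where powers are real (rpow) powers. -/
theorem sum_base_le_two (x y z : ℝ) (hx : 0 < x) (hy : 0 < y) (hz : 0 < z)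
    (h : x * y * z = 1) :
    (x + 1) / (x ^ 2 + x + 1) + (y + 1) / (y ^ 2 + y + 1) + (z + 1) / (z ^ 2 + z + 1) ≤ 2 := by
  have dx : (0:ℝ) < x ^ 2 + x + 1 := by positivity
  have dy : (0:ℝ) < y ^ 2 + y + 1 := by positivity
  have dz : (0:ℝ) < z ^ 2 + z + 1 := by positivity
  rw [div_add_div _ _ (ne_of_gt dx) (ne_of_gt dy), div_add_div _ _ (by positivity) (ne_of_gt dz),
    div_le_iff₀ (by positivity)]
  have h1 : (x*y*z - 1) * (1 + x + y + z + x*y + y*z + z*x + 2*(x*y*z)) = 0 := by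
    rw [h]; ring
  nlinarith [h1, sq_nonneg (x*y - y*z), sq_nonneg (y*z - z*x), sq_nonneg (z*x - x*y)]

theorem bern (t α : ℝ) (ht : 0 ≤ t) (hα0 : 0 < α) (hα1 : α < 1) :
    t ^ α ≤ α * t + (1 - α) := by
  have := Real.geom_mean_le_arith_mean2_weighted (le_of_lt hα0) (by linarith : (0:ℝ) ≤ 1 - α)
    ht (zero_le_one) (by ring)
  simpa using this

theorem rpow_add_one_over_plus_quadratic (x y z α : ℝ) (hx : 0 < x) (hy : 0 < y) (hz : 0 < z)
    (h : x * y * z = 1) (hα0 : 0 < α) (hα1 : α < 1) :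
    ((x + 1) / (x ^ 2 + x + 1)) ^ α + ((y + 1) / (y ^ 2 + y + 1)) ^ α +
      ((z + 1) / (z ^ 2 + z + 1)) ^ α ≤ 3 - α := by
  have bx : (0:ℝ) ≤ (x + 1) / (x ^ 2 + x + 1) := by positivity
  have by' : (0:ℝ) ≤ (y + 1) / (y ^ 2 + y + 1) := by positivity
  have bz : (0:ℝ) ≤ (z + 1) / (z ^ 2 + z + 1) := by positivity
  have h1 := bern _ α bx hα0 hα1
  have h2 := bern _ α by' hα0 hα1
  have h3 := bern _ α bz hα0 hα1
  have hs := sum_base_le_two x y z hx hy hz h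
  nlinarith [mul_le_mul_of_nonneg_left hs (le_of_lt hα0)]
end
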